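/- arXiv:2208.13316 — 9 statements merged into one kernel-verified Lean document; each statement's English description precedes it below -/
import Mathlib

section
/- For the hierarchical parity model, the partition function satisfies the recursion Z_{k,p} = Z_{k-1,2p-1} · Z_{k-1,2p} · [cosh(βJ_{k,p}) + P_{k-1,2p-1} P_{k-1,2p} sinh(βJ_{k,p})], where P_{k,p} is the thermal expectation of the parity of the spins in sub-system (k,p). -/
open Real BigOperators Finset

noncomputable section

/-- Map a Boolean spin to ±1. -/
def spin (b : Bool) : ℝ := if b then 1 else -1

/-- Embed index of left half. -/
def finLeft {k : ℕ} (i : Fin (2^k)) : Fin (2^(k+1)) :=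
  ⟨i.val, lt_of_lt_of_le i.isLt (Nat.pow_le_pow_right (by norm_num) (Nat.le_succ k))⟩

/-- Embed index of right half. -/
def finRight {k : ℕ} (i : Fin (2^k)) : Fin (2^(k+1)) :=
  ⟨2^k + i.val, by
    have h := i.isLt
    have h2 : 2^(k+1) = 2^k + 2^k := by rw [pow_succ]; ring
    omega⟩

/-- Parity (product of ±1 spins) of a configuration. -/
def parityProd {m : ℕ} (s : Fin m → Bool) : ℝ := ∏ i, spin (s i)

/-- Hamiltonian of sub-system (k,p) of the hierarchical parity model,
as a function of its own 2^k spins. -/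
def Hsub (J : ℕ → ℕ → ℝ) : (k : ℕ) → ℕ → (Fin (2^k) → Bool) → ℝ
  | 0, p, s => -(J 0 p) * spin (s ⟨0, Nat.two_pow_pos 0⟩)
  | (k+1), p, s =>
      Hsub J k (2*p-1) (fun i => s (finLeft i)) +
      Hsub J k (2*p) (fun i => s (finRight i)) -
      J (k+1) p * parityProd s

/-- Partition function of sub-system (k,p). -/
def Z (J : ℕ → ℕ → ℝ) (β : ℝ) (k p : ℕ) : ℝ :=
  ∑ s : Fin (2^k) → Bool, Real.exp (-β * Hsub J k p s)

/-- Thermal expectation of the parity of sub-system (k,p). -/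
def Pexp (J : ℕ → ℕ → ℝ) (β : ℝ) (k p : ℕ) : ℝ :=
  (∑ s : Fin (2^k) → Bool, parityProd s * Real.exp (-β * Hsub J k p s)) / Z J β k p

def halfEquiv (k : ℕ) : Fin (2^k) ⊕ Fin (2^k) ≃ Fin (2^(k+1)) :=
  finSumFinEquiv.trans (finCongr (by rw [pow_succ, mul_two]))

def splitConfig (α : Type*) (k : ℕ) : (Fin (2^(k+1)) → α) ≃ (Fin (2^k) → α) × (Fin (2^k) → α) :=
  ((halfEquiv k).arrowCongr (Equiv.refl α)).symm.trans (Equiv.sumArrowEquivProdArrow _ _ _)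

lemma parityProd_eq_one_or_neg_one {m : ℕ} (s : Fin m → Bool) :
    parityProd s = 1 ∨ parityProd s = -1 := by
  refine Finset.prod_induction _ (fun x : ℝ => x = 1 ∨ x = -1) ?_ (Or.inl rfl) ?_
  · rintro a b (rfl | rfl) (rfl | rfl) <;> norm_num
  · intro i _
    unfold spin
    split_ifs <;> simp

lemma parityProd_eq_mul_split {k : ℕ} (s : Fin (2^(k+1)) → Bool) :
    parityProd s = parityProd (splitConfig Bool k s).1 * parityProd (splitConfig Bool k s).2 := by
  rw [parityProd, ← (halfEquiv k).prod_comp, Fintype.prod_sum_type]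
  rfl

lemma Real.exp_mul_of_eq_one_or_neg_one {t : ℝ} (ht : t = 1 ∨ t = -1) (x : ℝ) :
    Real.exp (x * t) = Real.cosh x + t * Real.sinh x := by
  rcases ht with rfl | rfl
  · simp [Real.cosh_add_sinh]
  · rw [mul_neg_one, neg_one_mul, ← sub_eq_add_neg, Real.cosh_sub_sinh]

lemma Hsub_succ (J : ℕ → ℕ → ℝ) (k p : ℕ) (s : Fin (2^(k+1)) → Bool) :
    Hsub J (k+1) p s =
      Hsub J k (2*p-1) (splitConfig Bool k s).1 + Hsub J k (2*p) (splitConfig Bool k s).2 -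
        J (k+1) p * (parityProd (splitConfig Bool k s).1 * parityProd (splitConfig Bool k s).2) := by
  rw [← parityProd_eq_mul_split]
  rfl

/-- The coupling between the two halves is a function of the product of their parities,
which is `±1`, so its Boltzmann factor is linear in that product. -/
lemma exp_Hsub_succ (J : ℕ → ℕ → ℝ) (β : ℝ) (k p : ℕ) (a b : Fin (2^k) → Bool) :
    Real.exp (-β * Hsub J (k+1) p ((splitConfig Bool k).symm (a, b))) =
      Real.exp (-β * Hsub J k (2*p-1) a) * Real.exp (-β * Hsub J k (2*p) b) *
          Real.cosh (β * J (k+1) p) +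
        parityProd a * Real.exp (-β * Hsub J k (2*p-1) a) *
          (parityProd b * Real.exp (-β * Hsub J k (2*p) b)) * Real.sinh (β * J (k+1) p) := by
  have hab : parityProd a * parityProd b = 1 ∨ parityProd a * parityProd b = -1 := by
    rcases parityProd_eq_one_or_neg_one a with ha | ha <;>
      rcases parityProd_eq_one_or_neg_one b with hb | hb <;> simp [ha, hb]
  rw [Hsub_succ, Equiv.apply_symm_apply]
  calc Real.exp (-β * (Hsub J k (2*p-1) a + Hsub J k (2*p) b -
          J (k+1) p * (parityProd a * parityProd b)))
      = Real.exp (-β * Hsub J k (2*p-1) a) * Real.exp (-β * Hsub J k (2*p) b) *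
          Real.exp (β * J (k+1) p * (parityProd a * parityProd b)) := by
        rw [← Real.exp_add, ← Real.exp_add]; ring_nf
    _ = _ := by rw [Real.exp_mul_of_eq_one_or_neg_one hab]; ring

lemma sum_sum_mul_mul {ι κ : Type*} [Fintype ι] [Fintype κ] (f : ι → ℝ) (g : κ → ℝ) (c : ℝ) :
    ∑ a, ∑ b, f a * g b * c = (∑ a, f a) * (∑ b, g b) * c := by
  simp_rw [Finset.sum_mul_sum, Finset.sum_mul]

def parityWeight (J : ℕ → ℕ → ℝ) (β : ℝ) (k p : ℕ) : ℝ :=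
  ∑ s : Fin (2^k) → Bool, parityProd s * Real.exp (-β * Hsub J k p s)

lemma Z_pos (J : ℕ → ℕ → ℝ) (β : ℝ) (k p : ℕ) : 0 < Z J β k p :=
  Finset.sum_pos (fun _ _ => Real.exp_pos _) Finset.univ_nonempty

lemma Pexp_mul_Z (J : ℕ → ℕ → ℝ) (β : ℝ) (k p : ℕ) :
    Pexp J β k p * Z J β k p = parityWeight J β k p :=
  div_mul_cancel₀ _ (Z_pos J β k p).ne'

lemma Z_succ (J : ℕ → ℕ → ℝ) (β : ℝ) (k p : ℕ) :
    Z J β (k+1) p =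
      Z J β k (2*p-1) * Z J β k (2*p) * Real.cosh (β * J (k+1) p) +
        parityWeight J β k (2*p-1) * parityWeight J β k (2*p) * Real.sinh (β * J (k+1) p) := by
  rw [Z, ← (splitConfig Bool k).symm.sum_comp, Fintype.sum_prod_type]
  simp only [exp_Hsub_succ, Finset.sum_add_distrib, sum_sum_mul_mul]
  rfl

theorem partition_function_recursion_general (J : ℕ → ℕ → ℝ) (β : ℝ) (k p : ℕ) :
    Z J β (k+1) p =
      Z J β k (2*p-1) * Z J β k (2*p) *
        (Real.cosh (β * J (k+1) p) +
          Pexp J β k (2*p-1) * Pexp J β k (2*p) * Real.sinh (β * J (k+1) p)) := by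
  rw [Z_succ, ← Pexp_mul_Z, ← Pexp_mul_Z]
  ring

/-- partition function recursion. -/
theorem partition_function_recursion (J : ℕ → ℕ → ℝ) (β : ℝ) (hβ : 0 < β) (k p : ℕ) (hp : 1 ≤ p) :
    Z J β (k+1) p =
      Z J β k (2*p-1) * Z J β k (2*p) *
        (Real.cosh (β * J (k+1) p) +
          Pexp J β k (2*p-1) * Pexp J β k (2*p) * Real.sinh (β * J (k+1) p)) :=
  partition_function_recursion_general J β k p

end
end

section
/- For the width-symmetric model with J_k = 2^{kσ} J and J ≠ 0, the series ∑_{k≥1} 2^{-k} ln[cosh(βJ_k) + P_{k-1}^2 sinh(βJ_k)] converges (so the thermodynamic limit of the free energy density exists) if σ < 1, and diverges if σ ≥ 1. -/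
open Real BigOperators Finset

noncomputable section

/-- Height-dependent couplings J_k = 2^{kσ} J. -/
noncomputable def Jcoup (σ J : ℝ) (k : ℕ) : ℝ := (2:ℝ)^((k:ℝ)*σ) * J

/-- The width-symmetric parity recursion P_k, with P_0 = tanh(βJ). -/
noncomputable def Pseq (β σ J : ℝ) : ℕ → ℝ
  | 0 => Real.tanh (β * J)
  | (k+1) =>
      (Real.sinh (β * Jcoup σ J (k+1)) +
          (Pseq β σ J k)^2 * Real.cosh (β * Jcoup σ J (k+1))) /
      (Real.cosh (β * Jcoup σ J (k+1)) +
          (Pseq β σ J k)^2 * Real.sinh (β * Jcoup σ J (k+1)))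

/-
The series term is `2^{-k} log D_k` with `D_k = cosh x_k + P_{k-1}^2 sinh x_k`, `x_k = β J_k`.
Since `e^{-|x|} ≤ D ≤ e^{|x|}`, the terms are bounded by `|βJ| 2^{k(σ-1)}`, which is summable for
`σ < 1`. For divergence one tracks `u_k = -log(1 - P_k^2) ≥ 0`: the recursion gives the exact identity
`1 - P_k^2 = (1 - P_{k-1}^2)(1 + P_{k-1}^2) / D_k^2`, so `log D_k` is a telescoping difference of the
`u_k` plus a nonnegative term, and summation by parts bounds `∑ 2^{-k} u_k` by the free-energy series.
On the other hand `D_k ≥ e^{|x_k|}(1 - P_{k-1}^2)/2` yields `u_{k-1} + u_k ≥ 2|x_k| - log 8`, which for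
`σ ≥ 1` keeps `2^{-k}(u_{k-1} + u_k)` away from zero.
-/

open Filter Topology

lemma summable_of_sub_add_le {a t w : ℕ → ℝ} (ha : Summable a) (ht : ∀ k, 0 ≤ t k)
    (hw : ∀ k, 0 ≤ w k) (h : ∀ k, t (k + 1) - t k + w k ≤ a k) : Summable w := by
  obtain ⟨C, hC⟩ := ha.hasSum.tendsto_sum_nat.isBoundedUnder_le.bddAbove_range
  refine summable_of_sum_range_le (c := C + t 0) hw fun N => ?_
  have hsum : ∑ k ∈ range N, (t (k + 1) - t k + w k) ≤ ∑ k ∈ range N, a k :=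
    sum_le_sum fun k _ => h k
  rw [sum_add_distrib, sum_range_sub] at hsum
  linarith [hC ⟨N, rfl⟩, ht N]

lemma inv_two_pow_mul_two_rpow (σ : ℝ) (n : ℕ) :
    ((2 : ℝ) ^ n)⁻¹ * 2 ^ ((n : ℝ) * σ) = ((2 : ℝ) ^ (σ - 1)) ^ n := by
  rw [← rpow_natCast, ← rpow_neg zero_le_two, ← rpow_add two_pos, ← rpow_natCast,
    ← rpow_mul zero_le_two]
  ring_nf

section RecursionStep

variable (x P : ℝ)

def recursionDenom : ℝ := cosh x + P ^ 2 * sinh x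

def recursionMap : ℝ := (sinh x + P ^ 2 * cosh x) / recursionDenom x P

lemma cosh_mul_one_sub_sq_le_recursionDenom : cosh x * (1 - P ^ 2) ≤ recursionDenom x P := by
  have := cosh_add_sinh x
  rw [recursionDenom]
  nlinarith [sq_nonneg P, exp_pos x]

lemma exp_abs_le_two_mul_cosh : exp |x| ≤ 2 * cosh x := by
  rw [← cosh_abs, cosh_eq]
  linarith [exp_pos (-|x|)]

variable {x P}

lemma recursionDenom_pos (hP : P ^ 2 < 1) : 0 < recursionDenom x P :=
  lt_of_lt_of_le (by nlinarith [cosh_pos x]) (cosh_mul_one_sub_sq_le_recursionDenom x P)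

lemma exp_neg_abs_le_recursionDenom (hP : P ^ 2 ≤ 1) : exp (-|x|) ≤ recursionDenom x P := by
  have h1 : exp (-|x|) ≤ 1 := exp_le_one_iff.mpr (neg_nonpos.mpr (abs_nonneg x))
  have h2 : exp (-|x|) ≤ exp x := exp_le_exp.mpr (neg_abs_le x)
  have := cosh_add_sinh x
  rw [recursionDenom]
  nlinarith [one_le_cosh x, sq_nonneg P]

lemma recursionDenom_le_exp_abs (hP : P ^ 2 ≤ 1) : recursionDenom x P ≤ exp |x| := by
  rw [recursionDenom]
  rcases le_or_gt 0 x with hx | hx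
  · rw [abs_of_nonneg hx, ← cosh_add_sinh]
    nlinarith [sinh_nonneg_iff.mpr hx, sq_nonneg P]
  · rw [abs_of_neg hx, ← cosh_add_sinh, cosh_neg, sinh_neg]
    nlinarith [sinh_nonpos_iff.mpr hx.le, sq_nonneg P]

lemma abs_log_recursionDenom_le (hP : P ^ 2 ≤ 1) : |log (recursionDenom x P)| ≤ |x| := by
  have hD := (exp_pos _).trans_le (exp_neg_abs_le_recursionDenom (x := x) hP)
  exact abs_le.mpr ⟨(le_log_iff_exp_le hD).mpr (exp_neg_abs_le_recursionDenom hP),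
    (log_le_iff_le_exp hD).mpr (recursionDenom_le_exp_abs hP)⟩

lemma one_sub_recursionMap_sq (hP : P ^ 2 < 1) :
    1 - recursionMap x P ^ 2 = (1 - P ^ 2) * (1 + P ^ 2) / recursionDenom x P ^ 2 := by
  have hD := (pow_pos (recursionDenom_pos (x := x) hP) 2).ne'
  rw [recursionMap, div_pow, eq_div_iff hD, sub_mul, div_mul_cancel₀ _ hD, recursionDenom]
  linear_combination (1 - P ^ 4) * cosh_sq_sub_sinh_sq x

lemma recursionMap_sq_lt_one (hP : P ^ 2 < 1) : recursionMap x P ^ 2 < 1 := by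
  have : 0 < (1 - P ^ 2) * (1 + P ^ 2) / recursionDenom x P ^ 2 :=
    div_pos (by nlinarith) (pow_pos (recursionDenom_pos hP) 2)
  linarith [one_sub_recursionMap_sq (x := x) hP]

lemma log_recursionDenom_eq (hP : P ^ 2 < 1) :
    log (recursionDenom x P) =
      (log (1 + P ^ 2) - log (1 - recursionMap x P ^ 2) + log (1 - P ^ 2)) / 2 := by
  have hD := recursionDenom_pos (x := x) hP
  rw [one_sub_recursionMap_sq hP, log_div (by nlinarith) (by positivity),
    log_mul (by linarith) (by positivity), log_pow]
  push_cast
  ring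

lemma one_sub_sq_mul_one_sub_recursionMap_sq_le (hP : P ^ 2 < 1) :
    (1 - P ^ 2) * (1 - recursionMap x P ^ 2) ≤ 8 * exp (-(2 * |x|)) := by
  have hq : 0 < 1 - P ^ 2 := by linarith
  have hD := recursionDenom_pos (x := x) hP
  have hlow : exp |x| * (1 - P ^ 2) ≤ 2 * recursionDenom x P := by
    nlinarith [exp_abs_le_two_mul_cosh x, cosh_mul_one_sub_sq_le_recursionDenom x P]
  have hlow_sq : (exp |x| * (1 - P ^ 2)) ^ 2 ≤ (2 * recursionDenom x P) ^ 2 :=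
    pow_le_pow_left₀ (by positivity) hlow 2
  rw [one_sub_recursionMap_sq hP, exp_neg, show 2 * |x| = |x| + |x| by ring, exp_add,
    mul_div_assoc', div_le_iff₀ (by positivity)]
  field_simp
  nlinarith [sq_nonneg P, sq_nonneg (1 - P ^ 2), exp_pos |x|]

end RecursionStep

section Model

variable (β σ J : ℝ)

lemma Pseq_succ (k : ℕ) :
    Pseq β σ J (k + 1) = recursionMap (β * Jcoup σ J (k + 1)) (Pseq β σ J k) := rfl

lemma Pseq_sq_lt_one (k : ℕ) : Pseq β σ J k ^ 2 < 1 := by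
  induction k with
  | zero =>
    rw [Pseq, tanh_eq_sinh_div_cosh, div_pow, div_lt_one (by positivity)]
    nlinarith [cosh_sq_sub_sinh_sq (β * J)]
  | succ k ih => exact Pseq_succ β σ J k ▸ recursionMap_sq_lt_one ih

lemma abs_mul_Jcoup (k : ℕ) : |β * Jcoup σ J k| = |β * J| * 2 ^ ((k : ℝ) * σ) := by
  rw [Jcoup, abs_mul, abs_mul, abs_mul, abs_of_pos (rpow_pos_of_pos two_pos _)]
  ring

def parityGapLog (k : ℕ) : ℝ := -log (1 - Pseq β σ J k ^ 2)

lemma parityGapLog_nonneg (k : ℕ) : 0 ≤ parityGapLog β σ J k := by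
  have := Pseq_sq_lt_one β σ J k
  rw [parityGapLog, neg_nonneg]
  exact log_nonpos (by linarith) (by nlinarith)

lemma log_recursionDenom_Pseq (k : ℕ) :
    log (recursionDenom (β * Jcoup σ J (k + 1)) (Pseq β σ J k)) =
      (log (1 + Pseq β σ J k ^ 2) + parityGapLog β σ J (k + 1) - parityGapLog β σ J k) / 2 := by
  rw [log_recursionDenom_eq (Pseq_sq_lt_one β σ J k), parityGapLog, parityGapLog, Pseq_succ]
  ring

lemma parityGapLog_add_succ_ge (k : ℕ) :
    2 * |β * Jcoup σ J (k + 1)| - log 8 ≤ parityGapLog β σ J k + parityGapLog β σ J (k + 1) := by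
  have hP := Pseq_sq_lt_one β σ J k
  have hprod := one_sub_sq_mul_one_sub_recursionMap_sq_le (x := β * Jcoup σ J (k + 1)) hP
  rw [← Pseq_succ] at hprod
  have hq : 0 < 1 - Pseq β σ J k ^ 2 := by linarith
  have hq' : 0 < 1 - Pseq β σ J (k + 1) ^ 2 := by linarith [Pseq_sq_lt_one β σ J (k + 1)]
  have hlog := log_le_log (mul_pos hq hq') hprod
  rw [log_mul hq.ne' hq'.ne', log_mul (by norm_num) (exp_pos _).ne', log_exp] at hlog
  rw [parityGapLog, parityGapLog]
  linarith

end Model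

lemma abs_mul_Jcoup_ge_of_one_le (β J : ℝ) {σ : ℝ} (hσ : 1 ≤ σ) (k : ℕ) :
    |β * J| * 2 ^ k ≤ |β * Jcoup σ J k| := by
  rw [abs_mul_Jcoup, ← rpow_natCast]
  gcongr
  · norm_num
  · exact le_mul_of_one_le_right (Nat.cast_nonneg k) hσ

theorem summable_free_energy_of_lt_one (β J : ℝ) {σ : ℝ} (hσ : σ < 1) :
    Summable fun k : ℕ => ((2 : ℝ) ^ (k + 1))⁻¹ *
      log (recursionDenom (β * Jcoup σ J (k + 1)) (Pseq β σ J k)) := by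
  set r : ℝ := 2 ^ (σ - 1)
  have hr : r < 1 := rpow_lt_one_of_one_lt_of_neg one_lt_two (by linarith)
  refine ((summable_geometric_of_lt_one (by positivity) hr).mul_left (|β * J| * r)).of_norm_bounded
    fun k => ?_
  calc ‖((2 : ℝ) ^ (k + 1))⁻¹ * log (recursionDenom (β * Jcoup σ J (k + 1)) (Pseq β σ J k))‖
      = ((2 : ℝ) ^ (k + 1))⁻¹ * |log (recursionDenom (β * Jcoup σ J (k + 1)) (Pseq β σ J k))| := by
        rw [norm_mul, norm_inv, norm_pow, Real.norm_two, Real.norm_eq_abs]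
    _ ≤ ((2 : ℝ) ^ (k + 1))⁻¹ * |β * Jcoup σ J (k + 1)| :=
        mul_le_mul_of_nonneg_left
          (abs_log_recursionDenom_le (Pseq_sq_lt_one β σ J k).le) (by positivity)
    _ = |β * J| * r * r ^ k := by
        rw [abs_mul_Jcoup, mul_left_comm, inv_two_pow_mul_two_rpow, pow_succ]
        ring

lemma summable_parityGapLog_of_summable {β σ J : ℝ}
    (hsum : Summable fun k : ℕ => ((2 : ℝ) ^ (k + 1))⁻¹ *
      log (recursionDenom (β * Jcoup σ J (k + 1)) (Pseq β σ J k))) :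
    Summable fun k : ℕ => ((2 : ℝ) ^ (k + 3))⁻¹ * parityGapLog β σ J (k + 1) := by
  set u := parityGapLog β σ J
  refine summable_of_sub_add_le hsum (t := fun k => ((2 : ℝ) ^ (k + 2))⁻¹ * u k)
    (fun k => mul_nonneg (by positivity) (parityGapLog_nonneg β σ J k))
    (fun k => mul_nonneg (by positivity) (parityGapLog_nonneg β σ J (k + 1))) fun k => ?_
  have hL := log_nonneg (le_add_of_nonneg_right (sq_nonneg (Pseq β σ J k)))
  calc ((2 : ℝ) ^ (k + 1 + 2))⁻¹ * u (k + 1) - ((2 : ℝ) ^ (k + 2))⁻¹ * u k +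
        ((2 : ℝ) ^ (k + 3))⁻¹ * u (k + 1)
      = ((2 : ℝ) ^ (k + 2))⁻¹ * (u (k + 1) - u k) := by ring
    _ ≤ ((2 : ℝ) ^ (k + 2))⁻¹ * (log (1 + Pseq β σ J k ^ 2) + u (k + 1) - u k) := by
      gcongr
      linarith
    _ = _ := by
      rw [log_recursionDenom_Pseq]
      ring

lemma parityGapLog_weighted_add_succ_ge (β J : ℝ) {σ : ℝ} (hσ : 1 ≤ σ) (k : ℕ) :
    |β * J| / 2 - ((2 : ℝ) ^ (k + 4))⁻¹ * log 8 ≤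
      ((2 : ℝ) ^ (k + 3))⁻¹ * parityGapLog β σ J (k + 1) +
        ((2 : ℝ) ^ (k + 4))⁻¹ * parityGapLog β σ J (k + 2) := by
  set u := parityGapLog β σ J
  have hpair := parityGapLog_add_succ_ge β σ J (k + 1)
  have hx := abs_mul_Jcoup_ge_of_one_le β J hσ (k + 2)
  have hshift : ((2 : ℝ) ^ (k + 4))⁻¹ * u (k + 1) ≤ ((2 : ℝ) ^ (k + 3))⁻¹ * u (k + 1) := by
    gcongr
    · exact parityGapLog_nonneg β σ J (k + 1)
    · norm_num
    · omega
  calc |β * J| / 2 - ((2 : ℝ) ^ (k + 4))⁻¹ * log 8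
      = ((2 : ℝ) ^ (k + 4))⁻¹ * (2 * (|β * J| * 2 ^ (k + 2)) - log 8) := by
        field_simp
        ring
    _ ≤ ((2 : ℝ) ^ (k + 4))⁻¹ * (u (k + 1) + u (k + 2)) := by
        gcongr
        linarith
    _ ≤ _ := by linarith

theorem not_summable_free_energy_of_one_le {β J : ℝ} (hβ : 0 < β) (hJ : J ≠ 0) {σ : ℝ}
    (hσ : 1 ≤ σ) :
    ¬ Summable fun k : ℕ => ((2 : ℝ) ^ (k + 1))⁻¹ *
      log (recursionDenom (β * Jcoup σ J (k + 1)) (Pseq β σ J k)) := by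
  intro hsum
  have hw := summable_parityGapLog_of_summable hsum
  have hzero := hw.tendsto_atTop_zero.add (hw.tendsto_atTop_zero.comp (tendsto_add_atTop_nat 1))
  have hbound : Tendsto (fun k : ℕ => |β * J| / 2 - ((2 : ℝ) ^ (k + 4))⁻¹ * log 8) atTop
      (𝓝 (|β * J| / 2)) := by
    have := (tendsto_inv_atTop_zero.comp ((tendsto_pow_atTop_atTop_of_one_lt one_lt_two).comp
      (tendsto_add_atTop_nat 4))).mul_const (log 8)
    simpa using tendsto_const_nhds.sub this
  have hle := le_of_tendsto_of_tendsto' hbound hzero (parityGapLog_weighted_add_succ_ge β J hσ)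
  have : 0 < |β * J| := abs_pos.mpr (mul_ne_zero hβ.ne' hJ)
  linarith

/-- the free-energy series converges iff σ < 1. -/
theorem free_energy_series_convergence (β σ J : ℝ) (hβ : 0 < β) (hJ : J ≠ 0) :
    (σ < 1 → Summable (fun k : ℕ => ((2:ℝ)^(k+1))⁻¹ *
      Real.log (Real.cosh (β * Jcoup σ J (k+1)) +
        (Pseq β σ J k)^2 * Real.sinh (β * Jcoup σ J (k+1))))) ∧
    (1 ≤ σ → ¬ Summable (fun k : ℕ => ((2:ℝ)^(k+1))⁻¹ *
      Real.log (Real.cosh (β * Jcoup σ J (k+1)) +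
        (Pseq β σ J k)^2 * Real.sinh (β * Jcoup σ J (k+1))))) :=
  ⟨summable_free_energy_of_lt_one β J, not_summable_free_energy_of_one_le hβ hJ⟩
end
end

section
/- The three fixed points of the uniform parity recursion map are all equal (to 1) precisely when coth(βJ) = 3, i.e., at the critical inverse temperature β_c = ln(2)/(2J) for J > 0. -/
lemma coth_eq_three_iff (x : ℝ) (hx : 0 < x) :
    Real.cosh x / Real.sinh x = 3 ↔ Real.exp (2*x) = 2 := by
  have hs : Real.sinh x ≠ 0 := ne_of_gt (by rwa [Real.sinh_pos_iff])
  have hE : Real.exp (2*x) = Real.exp x * Real.exp x := by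
    rw [← Real.exp_add]; ring_nf
  have hprod : Real.exp x * Real.exp (-x) = 1 := by
    rw [← Real.exp_add]; simp
  rw [div_eq_iff hs]
  constructor
  · intro h
    rw [Real.cosh_eq, Real.sinh_eq] at h
    have h2 : Real.exp x = 2 * Real.exp (-x) := by linarith
    calc Real.exp (2*x) = Real.exp x * Real.exp x := hE
    _ = Real.exp x * (2 * Real.exp (-x)) := by rw [← h2]
    _ = 2 * (Real.exp x * Real.exp (-x)) := by ring
    _ = 2 := by rw [hprod]; ring
  · intro h
    rw [Real.cosh_eq, Real.sinh_eq]
    have h2 : Real.exp x * Real.exp x = 2 := by rw [← hE]; exact h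
    have h3 : Real.exp x = 2 * Real.exp (-x) := by
      have hpos : 0 < Real.exp x := Real.exp_pos x
      nlinarith [hprod]
    linarith

/-- the three fixed points all coincide (equal 1) precisely when
coth(βJ) = 3, i.e. at β_c = ln 2/(2J) for J > 0. -/
theorem fixed_points_degenerate_at_critical (β J : ℝ) (hJ : 0 < J) (hβ : 0 < β) :
    (Real.cosh (β*J) / Real.sinh (β*J) = 3 ↔ β = Real.log 2 / (2*J)) ∧
    (((Real.cosh (β*J)/Real.sinh (β*J) - 1)/2 +
        (1/2) * Real.sqrt ((Real.cosh (β*J)/Real.sinh (β*J) - 3) *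
          (Real.cosh (β*J)/Real.sinh (β*J) + 1)) = 1 ∧
      (Real.cosh (β*J)/Real.sinh (β*J) - 1)/2 -
        (1/2) * Real.sqrt ((Real.cosh (β*J)/Real.sinh (β*J) - 3) *
          (Real.cosh (β*J)/Real.sinh (β*J) + 1)) = 1) ↔
      Real.cosh (β*J) / Real.sinh (β*J) = 3) := by
  have hx : 0 < β * J := mul_pos hβ hJ
  constructor
  · rw [coth_eq_three_iff (β*J) hx]
    constructor
    · intro h
      have hlog : 2 * (β * J) = Real.log 2 := by
        rw [← Real.log_exp (2*(β*J)), h]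
      field_simp
      linarith
    · intro h
      have : 2 * (β * J) = Real.log 2 := by
        rw [h]; field_simp
      rw [this, Real.exp_log]; norm_num
  · constructor
    · rintro ⟨h1, h2⟩; linarith
    · intro h; rw [h]; norm_num
end

section
/- For J > 0 and β > β_c = ln(2)/(2J), the fixed point P = 1 of the map f(P) = [sinh(βJ) + P² cosh(βJ)]/[cosh(βJ) + P² sinh(βJ)] is stable, i.e., |f'(1)| < 1; for 0 < β < β_c it is unstable, i.e., f'(1) > 1. -/
/-! By the quotient rule, `f'(1) = 2 (cosh² x - sinh² x) / (cosh x + sinh x)² = 2 e^{-2x}` with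
`x = βJ`, and `2 e^{-y} = e^{log 2 - y}` is below or above `1` according as `y = 2βJ` is above or
below `log 2`. -/

open Real

theorem hasDerivAt_parity_map (s c P : ℝ) (h : c + P ^ 2 * s ≠ 0) :
    HasDerivAt (fun P : ℝ => (s + P ^ 2 * c) / (c + P ^ 2 * s))
      (2 * P * (c ^ 2 - s ^ 2) / (c + P ^ 2 * s) ^ 2) P := by
  have hnum : HasDerivAt (fun P : ℝ => s + P ^ 2 * c) (2 * P * c) P := by
    simpa using ((hasDerivAt_pow 2 P).mul_const c).const_add s
  have hden : HasDerivAt (fun P : ℝ => c + P ^ 2 * s) (2 * P * s) P := by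
    simpa using ((hasDerivAt_pow 2 P).mul_const s).const_add c
  exact (hnum.div hden h).congr_deriv (by ring)

theorem hasDerivAt_parity_map_one (x : ℝ) :
    HasDerivAt (fun P : ℝ => (sinh x + P ^ 2 * cosh x) / (cosh x + P ^ 2 * sinh x))
      (2 * exp (-2 * x)) 1 := by
  have hden : cosh x + 1 ^ 2 * sinh x = exp x := by rw [one_pow, one_mul, cosh_add_sinh]
  convert hasDerivAt_parity_map (sinh x) (cosh x) 1 (hden ▸ (exp_pos x).ne') using 1
  rw [hden, cosh_sq_sub_sinh_sq, ← exp_nat_mul, neg_mul, exp_neg]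
  push_cast
  ring

theorem two_mul_exp_neg_eq (y : ℝ) : 2 * exp (-y) = exp (log 2 - y) := by
  rw [sub_eq_add_neg, exp_add, exp_log two_pos]

theorem two_mul_exp_neg_lt_one_iff (y : ℝ) : 2 * exp (-y) < 1 ↔ log 2 < y := by
  rw [two_mul_exp_neg_eq, exp_lt_one_iff, sub_neg]

theorem one_lt_two_mul_exp_neg_iff (y : ℝ) : 1 < 2 * exp (-y) ↔ y < log 2 := by
  rw [two_mul_exp_neg_eq, one_lt_exp_iff, sub_pos]

theorem fixed_point_one_stability_general (β J : ℝ) (hJ : 0 < J) :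
    HasDerivAt (fun P : ℝ => (Real.sinh (β*J) + P^2 * Real.cosh (β*J)) /
        (Real.cosh (β*J) + P^2 * Real.sinh (β*J)))
      (2 * Real.exp (-2*β*J)) 1 ∧
    (Real.log 2 / (2*J) < β → |2 * Real.exp (-2*β*J)| < 1) ∧
    (β < Real.log 2 / (2*J) → 1 < 2 * Real.exp (-2*β*J)) := by
  have hexp : -2 * β * J = -(2 * J * β) := by ring
  refine ⟨by simpa only [mul_assoc] using hasDerivAt_parity_map_one (β * J), fun h => ?_, fun h => ?_⟩
  · rw [abs_of_pos (by positivity), hexp, two_mul_exp_neg_lt_one_iff]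
    exact (div_lt_iff₀' (by positivity)).mp h
  · rw [hexp, one_lt_two_mul_exp_neg_iff]
    exact (lt_div_iff₀' (by positivity)).mp h

/-- stability of the fixed point P = 1 of the uniform parity map:
f'(1) = 2e^{-2βJ}, which is < 1 in absolute value for β > β_c and > 1 for β < β_c. -/
theorem fixed_point_one_stability (β J : ℝ) (hJ : 0 < J) (hβ : 0 < β) :
    HasDerivAt (fun P : ℝ => (Real.sinh (β*J) + P^2 * Real.cosh (β*J)) /
        (Real.cosh (β*J) + P^2 * Real.sinh (β*J)))
      (2 * Real.exp (-2*β*J)) 1 ∧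
    (Real.log 2 / (2*J) < β → |2 * Real.exp (-2*β*J)| < 1) ∧
    (β < Real.log 2 / (2*J) → 1 < 2 * Real.exp (-2*β*J)) :=
  fixed_point_one_stability_general β J hJ
end

section
/- For J > 0 and β < β_c = ln(2)/(2J), the fixed point P_∞^{(-)} = (coth(βJ)-1)/2 - (1/2)√((coth(βJ)-3)(coth(βJ)+1)) of the uniform parity map is real, lies in (0,1), and is stable. -/
/-!
With `x = βJ` and `c = coth x`, the condition `β < log 2 / (2J)` reads `e^{2x} < 2`, equivalently
`c > 3`, which makes `P = P_∞^{(-)}` a real root of `P² + 1 = (c - 1) P` in `(0, 1)`.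
Substituting this relation collapses the denominator of the parity map at `P` to
`cosh x + P² sinh x = e^{-x} (1 + P)`, so the derivative there is `2P e^{2x} / (1 + P)²`,
which is `< 4P / (1 + P)² ≤ 1`.
-/

open Real

/-- The smaller root of `P² - (c - 1) P + 1 = 0`. -/
noncomputable def minusRoot (c : ℝ) : ℝ :=
  (c - 1) / 2 - 1 / 2 * √((c - 3) * (c + 1))

section minusRoot

variable {c : ℝ}

lemma minusRoot_sq_add_one (hc : 3 ≤ c) : minusRoot c ^ 2 + 1 = (c - 1) * minusRoot c := by
  have hR : √((c - 3) * (c + 1)) ^ 2 = (c - 3) * (c + 1) := sq_sqrt (by nlinarith)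
  unfold minusRoot
  linear_combination hR / 4

lemma minusRoot_pos (hc : 3 ≤ c) : 0 < minusRoot c := by
  have hR : √((c - 3) * (c + 1)) < c - 1 :=
    (sqrt_lt' (by linarith)).2 (by nlinarith)
  unfold minusRoot
  linarith

lemma minusRoot_lt_one (hc : 3 < c) : minusRoot c < 1 := by
  have hR : c - 3 < √((c - 3) * (c + 1)) :=
    (lt_sqrt (by linarith)).2 (by nlinarith)
  unfold minusRoot
  linarith

end minusRoot

lemma exp_two_mul_mul_lt_two {β J : ℝ} (hJ : 0 < J) (hc : β < log 2 / (2 * J)) :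
    exp (2 * (β * J)) < 2 := by
  have h : 2 * (β * J) < log 2 := by
    have := (lt_div_iff₀ (by positivity : (0 : ℝ) < 2 * J)).1 hc
    linarith
  simpa [exp_log two_pos] using exp_lt_exp.2 h

lemma three_lt_coth_of_exp_two_mul_lt_two {x : ℝ} (hx : 0 < x) (h : exp (2 * x) < 2) :
    3 < cosh x / sinh x := by
  rw [lt_div_iff₀ (sinh_pos_iff.2 hx), cosh_eq, sinh_eq]
  have hexp : exp x * exp x = exp (2 * x) := by rw [← exp_add, two_mul]
  have hinv : exp x * exp (-x) = 1 := by rw [← exp_add, add_neg_cancel, exp_zero]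
  nlinarith [exp_pos x, exp_pos (-x)]

lemma cosh_add_sq_mul_sinh_of_sq_add_one {x P : ℝ} (hx : sinh x ≠ 0)
    (hP : P ^ 2 + 1 = (cosh x / sinh x - 1) * P) :
    cosh x + P ^ 2 * sinh x = exp (-x) * (1 + P) := by
  have hcs : cosh x / sinh x * sinh x = cosh x := div_mul_cancel₀ _ hx
  linear_combination (1 + P) * cosh_sub_sinh x + sinh x * hP + P * hcs

lemma hasDerivAt_parityMap {x P : ℝ} (hP : cosh x + P ^ 2 * sinh x ≠ 0) :
    HasDerivAt (fun Q : ℝ => (sinh x + Q ^ 2 * cosh x) / (cosh x + Q ^ 2 * sinh x))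
      (2 * P / (cosh x + P ^ 2 * sinh x) ^ 2) P := by
  have hnum := ((hasDerivAt_pow 2 P).mul_const (cosh x)).const_add (sinh x)
  have hden := ((hasDerivAt_pow 2 P).mul_const (sinh x)).const_add (cosh x)
  refine (hnum.div hden hP).congr_deriv (congrArg (· / _) ?_)
  norm_num
  linear_combination (2 * P) * cosh_sq_sub_sinh_sq x

lemma two_mul_div_sq_exp_neg_lt_one {x P : ℝ} (hP : 0 < P) (hx : exp (2 * x) < 2) :
    2 * P / (exp (-x) * (1 + P)) ^ 2 < 1 := by
  have hinv : exp (-x) ^ 2 * exp (2 * x) = 1 := by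
    rw [sq, ← exp_add, ← exp_add, ← exp_zero]
    ring_nf
  have hsq : (exp (-x) * (1 + P)) ^ 2 * exp (2 * x) = (1 + P) ^ 2 := by
    linear_combination (1 + P) ^ 2 * hinv
  rw [div_lt_one (by positivity)]
  have hbound : 2 * P * exp (2 * x) < (1 + P) ^ 2 := by
    nlinarith [mul_pos hP (sub_pos.2 hx), sq_nonneg (1 - P)]
  nlinarith [exp_pos (2 * x)]

/-- for J > 0 and 0 < β < β_c, the fixed point P_∞^{(-)} lies in (0,1)
and is stable (the parity map has derivative of modulus < 1 there). -/
theorem minus_fixed_point_stable (β J : ℝ) (hJ : 0 < J) (hβ : 0 < β)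
    (hc : β < Real.log 2 / (2*J)) :
    ∀ P : ℝ,
      P = (Real.cosh (β*J)/Real.sinh (β*J) - 1)/2 -
        (1/2) * Real.sqrt ((Real.cosh (β*J)/Real.sinh (β*J) - 3) *
          (Real.cosh (β*J)/Real.sinh (β*J) + 1)) →
      0 < P ∧ P < 1 ∧
      HasDerivAt (fun Q : ℝ => (Real.sinh (β*J) + Q^2 * Real.cosh (β*J)) /
          (Real.cosh (β*J) + Q^2 * Real.sinh (β*J)))
        (2 * P / (Real.cosh (β*J) + P^2 * Real.sinh (β*J))^2) P ∧
      |2 * P / (Real.cosh (β*J) + P^2 * Real.sinh (β*J))^2| < 1 := by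
  intro P hP
  change P = minusRoot _ at hP
  have hx : 0 < β * J := mul_pos hβ hJ
  have hexp := exp_two_mul_mul_lt_two hJ hc
  have hc3 := three_lt_coth_of_exp_two_mul_lt_two hx hexp
  have hP0 : 0 < P := hP ▸ minusRoot_pos hc3.le
  have hD : cosh (β * J) + P ^ 2 * sinh (β * J) = exp (-(β * J)) * (1 + P) :=
    cosh_add_sq_mul_sinh_of_sq_add_one (sinh_pos_iff.2 hx).ne'
      (hP ▸ minusRoot_sq_add_one hc3.le)
  have hDpos : 0 < cosh (β * J) + P ^ 2 * sinh (β * J) := hD ▸ by positivity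
  refine ⟨hP0, hP ▸ minusRoot_lt_one hc3, hasDerivAt_parityMap hDpos.ne', ?_⟩
  rw [abs_of_pos (by positivity), hD]
  exact two_mul_div_sq_exp_neg_lt_one hP0 hexp
end

section
/- For J > 0, the fixed point P_∞^{(+)} = (coth(βJ)-1)/2 + (1/2)√((coth(βJ)-3)(coth(βJ)+1)) satisfies P_∞^{(+)} > 1 whenever β < β_c, hence is unphysical as a parity expectation value. -/
/-- for J > 0 and β < β_c, the fixed point P_∞^{(+)} exceeds 1. -/
theorem plus_fixed_point_unphysical (β J : ℝ) (hJ : 0 < J) (hβ : 0 < β)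
    (hc : β < Real.log 2 / (2*J)) :
    1 < (Real.cosh (β*J)/Real.sinh (β*J) - 1)/2 +
      (1/2) * Real.sqrt ((Real.cosh (β*J)/Real.sinh (β*J) - 3) *
        (Real.cosh (β*J)/Real.sinh (β*J) + 1)) := by
  set x := β * J with hxdef
  have hx : 0 < x := mul_pos hβ hJ
  have h2x : 2 * x < Real.log 2 := by
    have h := (lt_div_iff₀ (by positivity : (0:ℝ) < 2*J)).mp hc
    nlinarith
  have hexp : Real.exp (2*x) < 2 := by
    calc Real.exp (2*x) < Real.exp (Real.log 2) := Real.exp_lt_exp.mpr h2x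
    _ = 2 := Real.exp_log (by norm_num)
  have hex : Real.exp x * Real.exp x < 2 := by
    rw [← Real.exp_add]
    calc Real.exp (x + x) = Real.exp (2*x) := by ring_nf
    _ < 2 := hexp
  have hsinh : 0 < Real.sinh x := Real.sinh_pos_iff.mpr hx
  have hcoth : 3 < Real.cosh x / Real.sinh x := by
    rw [lt_div_iff₀ hsinh, Real.cosh_eq, Real.sinh_eq]
    have h1 : Real.exp (-x) = 1 / Real.exp x := by
      rw [Real.exp_neg]; ring
    have h2 : 0 < Real.exp x := Real.exp_pos x
    rw [h1]
    have h3 : 1 / Real.exp x * Real.exp x = 1 := by field_simp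
    nlinarith [h2, hex, h3]
  have hs := Real.sqrt_nonneg ((Real.cosh x / Real.sinh x - 3) *
        (Real.cosh x / Real.sinh x + 1))
  linarith
end

section
/- As β → β_c⁻ with J > 0, the stable fixed point satisfies the expansion P_∞^{(-)} = 1 - 2√(2(β_c - β)J) + 4(β_c - β)J + O((β_c - β)^{3/2}); in particular P_∞ is non-analytic at β = β_c. -/
set_option maxHeartbeats 1000000

lemma aux_sqrt_diff (a b : ℝ) (ha : 0 ≤ a) (hb : 0 < b) :
    |Real.sqrt a - Real.sqrt b| ≤ |a - b| / Real.sqrt b := by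
  have hsb : 0 < Real.sqrt b := Real.sqrt_pos.2 hb
  have hsa : 0 ≤ Real.sqrt a := Real.sqrt_nonneg a
  rw [le_div_iff₀ hsb]
  have h : (Real.sqrt a - Real.sqrt b) * (Real.sqrt a + Real.sqrt b) = a - b := by
    have := Real.sq_sqrt ha
    have := Real.sq_sqrt hb.le
    nlinarith
  have h2 : |a - b| = |Real.sqrt a - Real.sqrt b| * (Real.sqrt a + Real.sqrt b) := by
    rw [← h, abs_mul, abs_of_nonneg (by linarith : (0:ℝ) ≤ Real.sqrt a + Real.sqrt b)]
  rw [h2]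
  exact mul_le_mul_of_nonneg_left (by linarith) (abs_nonneg _)

lemma sinh_pos' (y : ℝ) (hy : 0 < y) : 0 < Real.sinh y := by
  rw [Real.sinh_eq]
  have : Real.exp (-y) < Real.exp y := Real.exp_lt_exp.2 (by linarith)
  linarith

lemma coth_exp (y : ℝ) (hy : 0 < y) :
    Real.cosh y / Real.sinh y = (Real.exp (2*y) + 1) / (Real.exp (2*y) - 1) := by
  have hw : 0 < Real.exp y := Real.exp_pos y
  have hs : 0 < Real.sinh y := sinh_pos' y hy
  have hz : (1:ℝ) < Real.exp (2*y) := by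
    rw [show (1:ℝ) = Real.exp 0 by simp]
    exact Real.exp_lt_exp.2 (by linarith)
  rw [Real.cosh_eq, Real.sinh_eq, Real.exp_neg, show (2:ℝ)*y = y + y by ring, Real.exp_add]
  rw [Real.sinh_eq, Real.exp_neg] at hs
  field_simp


lemma core_est (s : ℝ) (h0 : 0 < s) (h1 : s < 1/10) :
    |(1 - 2*Real.sqrt (Real.exp (-s) - Real.exp (-(2*s))))/(2*Real.exp (-s) - 1)
      - (1 - 2*Real.sqrt s + 2*s)| ≤ 28 * (s * Real.sqrt s) := by
  have hee : Real.exp (-(2*s)) = Real.exp (-s) * Real.exp (-s) := by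
    rw [← Real.exp_add]; ring_nf
  rw [hee]
  have hexp1 : 1 - s ≤ Real.exp (-s) := by
    have := Real.add_one_le_exp (-s); linarith
  have hexp1' : Real.exp (-s) ≤ 1 := by
    rw [show (1:ℝ) = Real.exp 0 by simp]; exact Real.exp_le_exp.2 (by linarith)
  have hexp2' : Real.exp (-s) ≤ 1 - s + s^2 := by
    have h2 : Real.exp (-s) ≤ 1/(1+s) := by
      rw [Real.exp_neg, one_div]
      gcongr
      all_goals linarith [Real.add_one_le_exp s]
    have h : (1:ℝ)/(1+s) ≤ 1 - s + s^2 := by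
      rw [div_le_iff₀ (by linarith)]; nlinarith
    linarith
  generalize hE : Real.exp (-s) = E at hexp1 hexp1' hexp2' ⊢
  set b : ℝ := E - E*E with hbdef
  set D : ℝ := 2*E - 1 with hDdef
  clear_value b D
  have hb_ub : b ≤ s := by nlinarith
  have hb_lb : s - 2*s^2 ≤ b := by nlinarith
  have hb_pos : 0 < b := by nlinarith
  have hD_lb : 1 - 2*s ≤ D := by rw [hDdef]; linarith
  have hD_ub : D ≤ 1 := by rw [hDdef]; linarith
  have hD_pos : (4:ℝ)/5 ≤ D := by linarith
  have hD2ub : D^2 ≤ 1 := by nlinarith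
  have hD2lb : 1 - 4*s ≤ D^2 := by nlinarith
  set w : ℝ := Real.sqrt s with hwdef
  clear_value w
  have hw_pos : 0 < w := by rw [hwdef]; exact Real.sqrt_pos.2 h0
  have hw_sq : w^2 = s := by rw [hwdef]; exact Real.sq_sqrt h0.le
  have hw_ub : w ≤ 1 := by nlinarith
  set a : ℝ := D^2 * s with hadef
  clear_value a
  have hsa : Real.sqrt a = D * w := by
    rw [hadef, hwdef, Real.sqrt_mul (sq_nonneg D), Real.sqrt_sq (by linarith : (0:ℝ) ≤ D)]
  have hab : |a - b| ≤ 6*s^2 := by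
    rw [hadef, abs_le]
    constructor <;> nlinarith
  have hkey : |Real.sqrt a - Real.sqrt b| ≤ 9 * (s * w) := by
    have h1' := aux_sqrt_diff a b (by rw [hadef]; positivity) hb_pos
    set u : ℝ := Real.sqrt b with hudef
    clear_value u
    have hu_pos : 0 < u := by rw [hudef]; exact Real.sqrt_pos.2 hb_pos
    have hu_sq : u^2 = b := by rw [hudef]; exact Real.sq_sqrt hb_pos.le
    have h2u : w^2 ≤ 2*u^2 := by
      have hs4 : s ≤ 2*(s - 2*s^2) := by nlinarith
      linarith [hb_lb, hu_sq, hw_sq]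
    have h5sq : (2*w)^2 ≤ (3*u)^2 := by nlinarith [sq_nonneg u]
    have h5 : 2*w ≤ 3*u := le_of_pow_le_pow_left₀ two_ne_zero (by positivity) h5sq
    have : |a - b| / u ≤ 9 * (s * w) := by
      rw [div_le_iff₀ hu_pos]
      have hs_w4 : s^2 = w^4 := by rw [← hw_sq]; ring
      have hs_w3 : s*w = w^3 := by rw [← hw_sq]; ring
      have h6 : (6:ℝ)*s^2 ≤ 9 * (s*w) * u := by
        rw [hs_w4, hs_w3]
        nlinarith [mul_nonneg (mul_nonneg hw_pos.le (mul_nonneg hw_pos.le hw_pos.le))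
          (by linarith : (0:ℝ) ≤ 3*u - 2*w)]
      linarith [hab]
    linarith
  have hnum : |1 - 2*Real.sqrt b - D * (1 - 2*w + 2*s)| ≤ 22 * (s*w) := by
    have heq : 1 - 2*Real.sqrt b - D * (1 - 2*w + 2*s)
        = (1 - D - 2*D*s) + 2*(Real.sqrt a - Real.sqrt b) := by
      rw [hsa]; ring
    rw [heq]
    have h2 : |1 - D - 2*D*s| ≤ 4*s^2 := by
      rw [abs_le]; constructor <;> nlinarith
    have h3 : 4*s^2 ≤ 4*(s*w) := by nlinarith
    have habs := abs_add_le (1 - D - 2*D*s) (2*(Real.sqrt a - Real.sqrt b))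
    have h4 : |2*(Real.sqrt a - Real.sqrt b)| = 2*|Real.sqrt a - Real.sqrt b| := by
      rw [abs_mul, abs_two]
    linarith [hkey]
  have heq2 : (1 - 2*Real.sqrt b)/D - (1 - 2*w + 2*s)
      = (1 - 2*Real.sqrt b - D * (1 - 2*w + 2*s))/D := by
    field_simp
  rw [heq2, abs_div, abs_of_pos (by linarith : (0:ℝ) < D), div_le_iff₀ (by linarith)]
  have hsw : 0 ≤ s * w := by positivity
  nlinarith [abs_nonneg (1 - 2*Real.sqrt b - D * (1 - 2*w + 2*s))]

/-- expansion of the stable fixed point near the critical temperature: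
P_∞^{(-)} = 1 - 2√(2(β_c-β)J) + 4(β_c-β)J + O((β_c-β)^{3/2}) as β → β_c⁻, for J > 0. -/
theorem fixed_point_critical_expansion (J : ℝ) (hJ : 0 < J) :
    ∃ C > (0:ℝ), ∃ δ > (0:ℝ), ∀ β : ℝ,
      Real.log 2 / (2*J) - δ < β → β < Real.log 2 / (2*J) →
      |((Real.cosh (β*J)/Real.sinh (β*J) - 1)/2 -
          (1/2) * Real.sqrt ((Real.cosh (β*J)/Real.sinh (β*J) - 3) *
            (Real.cosh (β*J)/Real.sinh (β*J) + 1))) -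
        (1 - 2 * Real.sqrt (2*(Real.log 2/(2*J) - β)*J) + 4*(Real.log 2/(2*J) - β)*J)| ≤
        C * (Real.log 2/(2*J) - β) ^ ((3:ℝ)/2) := by
  have h2J : (0:ℝ) < 2*J := by linarith
  refine ⟨28 * (2*J)^((3:ℝ)/2), by positivity, 1/(20*J), by positivity, ?_⟩
  intro β h_lo h_hi
  have hlog2 : (0.6931471803:ℝ) < Real.log 2 := Real.log_two_gt_d9
  set s : ℝ := Real.log 2 - 2*β*J with hsdef
  have hs_pos : 0 < s := by
    have h := (lt_div_iff₀ h2J).1 h_hi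
    rw [hsdef]; nlinarith
  have hs_ub : s < 1/10 := by
    have h := mul_lt_mul_of_pos_right h_lo h2J
    have e1 : Real.log 2/(2*J) * (2*J) = Real.log 2 := div_mul_cancel₀ _ h2J.ne'
    have e2 : (Real.log 2/(2*J) - 1/(20*J)) * (2*J) = Real.log 2 - 1/10 := by
      field_simp; ring
    rw [hsdef]; nlinarith
  have hβJ : 0 < β*J := by
    have h := mul_lt_mul_of_pos_right h_lo h2J
    have e2 : (Real.log 2/(2*J) - 1/(20*J)) * (2*J) = Real.log 2 - 1/10 := by
      field_simp; ring
    nlinarith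
  have hsub : Real.log 2/(2*J) - β = s/(2*J) := by
    rw [hsdef]; field_simp
  -- z and its facts
  have hexp1 : 1 - s ≤ Real.exp (-s) := by
    have := Real.add_one_le_exp (-s); linarith
  set z : ℝ := 2*Real.exp (-s) with hzdef
  have hz1 : (1:ℝ) < z := by rw [hzdef]; nlinarith
  have hz2 : z ≤ 2 := by
    have : Real.exp (-s) ≤ 1 := by
      rw [show (1:ℝ) = Real.exp 0 by simp]; exact Real.exp_le_exp.2 (by linarith)
    rw [hzdef]; linarith
  have hzm : z - 1 ≠ 0 := by linarith
  have hzexp : Real.exp (2*(β*J)) = z := by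
    rw [hzdef, show (-s) = 2*(β*J) - Real.log 2 by rw [hsdef]; ring,
      Real.exp_sub, Real.exp_log (by norm_num : (0:ℝ) < 2)]
    field_simp
  have hX : Real.cosh (β*J)/Real.sinh (β*J) = (z+1)/(z-1) := by
    rw [coth_exp (β*J) hβJ, hzexp]
  set bb : ℝ := Real.exp (-s) - Real.exp (-(2*s)) with hbbdef
  have hee : Real.exp (-(2*s)) = Real.exp (-s) * Real.exp (-s) := by
    rw [← Real.exp_add]; ring_nf
  have hD' : (2-z)*z = 4*bb := by
    rw [hbbdef, hee, hzdef]; ring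
  have hbb_nonneg : 0 ≤ bb := by
    have : Real.exp (-(2*s)) ≤ Real.exp (-s) := Real.exp_le_exp.2 (by linarith)
    rw [hbbdef]; linarith
  have hB : (Real.cosh (β*J)/Real.sinh (β*J) - 3) * (Real.cosh (β*J)/Real.sinh (β*J) + 1)
      = (2/(z-1))^2 * ((2-z)*z) := by
    rw [hX]; field_simp; ring
  have hC : Real.sqrt ((Real.cosh (β*J)/Real.sinh (β*J) - 3) *
      (Real.cosh (β*J)/Real.sinh (β*J) + 1)) = (2/(z-1)) * (2 * Real.sqrt bb) := by
    rw [hB, Real.sqrt_mul (sq_nonneg _), Real.sqrt_sq ((div_pos (by norm_num) (by linarith : (0:ℝ) < z - 1)).le),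
      hD', show (4:ℝ)*bb = 2^2*bb by ring, Real.sqrt_mul (sq_nonneg 2),
      Real.sqrt_sq (by norm_num : (0:ℝ) ≤ 2)]
  have hLHS : (Real.cosh (β*J)/Real.sinh (β*J) - 1)/2 -
      (1/2) * Real.sqrt ((Real.cosh (β*J)/Real.sinh (β*J) - 3) *
        (Real.cosh (β*J)/Real.sinh (β*J) + 1))
      = (1 - 2*Real.sqrt bb)/(2*Real.exp (-s) - 1) := by
    rw [hC, hX, ← hzdef]
    field_simp
    ring
  have ht1 : 2*(Real.log 2/(2*J) - β)*J = s := by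
    rw [hsub]; field_simp
  have ht2 : 4*(Real.log 2/(2*J) - β)*J = 2*s := by
    rw [hsub]; field_simp; ring
  have hp : s ^ ((3:ℝ)/2) = s * Real.sqrt s := by
    rw [Real.sqrt_eq_rpow, show ((3:ℝ)/2) = 1 + 1/2 by norm_num, Real.rpow_add hs_pos,
      Real.rpow_one]
  have hne : (2*J)^((3:ℝ)/2) ≠ 0 := (Real.rpow_pos_of_pos h2J _).ne'
  have hRHS : 28 * (2*J)^((3:ℝ)/2) * (Real.log 2/(2*J) - β) ^ ((3:ℝ)/2)
      = 28 * (s * Real.sqrt s) := by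
    rw [hsub, Real.div_rpow hs_pos.le h2J.le, hp]
    field_simp
  rw [hLHS, ht1, ht2, hRHS]
  exact core_est s hs_pos hs_ub
end

section
/- If all single-spin couplings J_{0,i} vanish, the hierarchical parity model on N = 2^n spins is equivalent to the model on N/2 composite spins S_j = s_{2j-1}s_{2j} with couplings J'_{k,p} = J_{k+1,p}: every energy level of the new system appears with multiplicity exactly 2^{N/2} in the original system. -/
open Real BigOperators Finset

noncomputable section

/-! ### Auxiliary machinery for the reduction -/

lemma two_pow_succ_eq (k : ℕ) : (2:ℕ)^(k+1) = 2^k + 2^k := by rw [pow_succ]; ring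

/-- even index `2i` inside `Fin (2^(k+1))`. -/
def idx0 {k : ℕ} (i : Fin (2^k)) : Fin (2^(k+1)) :=
  ⟨2 * i.val, by have h := i.isLt; have h2 := two_pow_succ_eq k; omega⟩

/-- odd index `2i+1` inside `Fin (2^(k+1))`. -/
def idx1 {k : ℕ} (i : Fin (2^k)) : Fin (2^(k+1)) :=
  ⟨2 * i.val + 1, by have h := i.isLt; have h2 := two_pow_succ_eq k; omega⟩

/-- halve an index. -/
def halfIdx {k : ℕ} (j : Fin (2^(k+1))) : Fin (2^k) :=
  ⟨j.val / 2, by have h := j.isLt; have h2 := two_pow_succ_eq k; omega⟩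

/-- The composite-spin map: `S i = (s (2i) == s (2i+1))`. -/
def pairMap {k : ℕ} (s : Fin (2^(k+1)) → Bool) : Fin (2^k) → Bool :=
  fun i => s (idx0 i) == s (idx1 i)

/-- Reconstruct a configuration from (composite spins, even-site spins). -/
def unpair {k : ℕ} (P : (Fin (2^k) → Bool) × (Fin (2^k) → Bool)) :
    Fin (2^(k+1)) → Bool :=
  fun j => if j.val % 2 = 0 then P.2 (halfIdx j)
           else (P.2 (halfIdx j) == P.1 (halfIdx j))

lemma spin_beq (a b : Bool) : spin (a == b) = spin a * spin b := by
  cases a <;> cases b <;> simp [spin] <;> norm_num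

lemma halfIdx_idx0 {k : ℕ} (i : Fin (2^k)) : halfIdx (idx0 i) = i := by
  apply Fin.ext; simp [halfIdx, idx0]

lemma halfIdx_idx1 {k : ℕ} (i : Fin (2^k)) : halfIdx (idx1 i) = i := by
  apply Fin.ext; simp [halfIdx, idx1]; omega

lemma unpair_idx0 {k : ℕ} (P : (Fin (2^k) → Bool) × (Fin (2^k) → Bool)) (i : Fin (2^k)) :
    unpair P (idx0 i) = P.2 i := by
  have hm : (idx0 i).val % 2 = 0 := by simp [idx0]
  rw [unpair, if_pos hm, halfIdx_idx0]

lemma unpair_idx1 {k : ℕ} (P : (Fin (2^k) → Bool) × (Fin (2^k) → Bool)) (i : Fin (2^k)) :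
    unpair P (idx1 i) = (P.2 i == P.1 i) := by
  have hm : ¬ (idx1 i).val % 2 = 0 := by simp [idx1]
  rw [unpair, if_neg hm, halfIdx_idx1]

lemma prod_pair_range (g : ℕ → ℝ) : ∀ m : ℕ,
    ∏ i ∈ Finset.range m, (g (2*i) * g (2*i+1)) = ∏ i ∈ Finset.range (2*m), g i := by
  intro m
  induction m with
  | zero => simp
  | succ m ih =>
      have h2 : 2 * (m+1) = (2*m + 1) + 1 := by ring
      rw [Finset.prod_range_succ, ih, h2, Finset.prod_range_succ, Finset.prod_range_succ]
      ring

lemma parityProd_pairMap {k : ℕ} (s : Fin (2^(k+1)) → Bool) :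
    parityProd (pairMap s) = parityProd s := by
  classical
  set g : ℕ → ℝ := fun j => if h : j < 2^(k+1) then spin (s ⟨j, h⟩) else 1 with hg
  have hL : parityProd (pairMap s) = ∏ i ∈ Finset.range (2^k), (g (2*i) * g (2*i+1)) := by
    rw [parityProd, ← Fin.prod_univ_eq_prod_range (fun i => g (2*i) * g (2*i+1)) (2^k)]
    refine Finset.prod_congr rfl (fun i _ => ?_)
    have h0 : 2*i.val < 2^(k+1) := (idx0 i).isLt
    have h1 : 2*i.val+1 < 2^(k+1) := (idx1 i).isLt
    simp only [hg, h0, h1, dif_pos]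
    rw [pairMap, spin_beq]
    rfl
  have hR : parityProd s = ∏ i ∈ Finset.range (2^(k+1)), g i := by
    rw [parityProd, ← Fin.prod_univ_eq_prod_range g (2^(k+1))]
    refine Finset.prod_congr rfl (fun i _ => ?_)
    simp [hg, i.isLt]
  rw [hL, hR, prod_pair_range]
  congr 1
  rw [pow_succ]; ring

lemma finLeft_idx0 {k : ℕ} (i : Fin (2^k)) : finLeft (idx0 i) = idx0 (finLeft i) := by
  apply Fin.ext; simp [finLeft, idx0]

lemma finLeft_idx1 {k : ℕ} (i : Fin (2^k)) : finLeft (idx1 i) = idx1 (finLeft i) := by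
  apply Fin.ext; simp [finLeft, idx1]

lemma finRight_idx0 {k : ℕ} (i : Fin (2^k)) : finRight (idx0 i) = idx0 (finRight i) := by
  apply Fin.ext
  have h2 := two_pow_succ_eq k
  simp [finRight, idx0]
  omega

lemma finRight_idx1 {k : ℕ} (i : Fin (2^k)) : finRight (idx1 i) = idx1 (finRight i) := by
  apply Fin.ext
  have h2 := two_pow_succ_eq k
  simp [finRight, idx1]
  omega

lemma pairMap_left {k : ℕ} (s : Fin (2^(k+1+1)) → Bool) :
    pairMap (fun i => s (finLeft i)) = fun i => pairMap s (finLeft i) := by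
  funext i
  simp only [pairMap, finLeft_idx0, finLeft_idx1]

lemma pairMap_right {k : ℕ} (s : Fin (2^(k+1+1)) → Bool) :
    pairMap (fun i => s (finRight i)) = fun i => pairMap s (finRight i) := by
  funext i
  simp only [pairMap, finRight_idx0, finRight_idx1]

lemma hsub_pair (J : ℕ → ℕ → ℝ) (h0 : ∀ p, J 0 p = 0) :
    ∀ (k p : ℕ) (s : Fin (2^(k+1)) → Bool),
      Hsub J (k+1) p s = Hsub (fun k p => J (k+1) p) k p (pairMap s) := by
  intro k
  induction k with
  | zero =>
      intro p s
      have hpar : parityProd s = spin (s (idx0 ⟨0, Nat.two_pow_pos 0⟩)) *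
          spin (s (idx1 ⟨0, Nat.two_pow_pos 0⟩)) := by
        rw [parityProd]
        have h := Fin.prod_univ_two (fun i : Fin (2^1) => spin (s i))
        refine h.trans ?_
        congr 1 <;> · apply congrArg; apply congrArg; apply Fin.ext; decide
      rw [Hsub, Hsub, Hsub, Hsub, h0, h0, hpar]
      have h2 : pairMap s ⟨0, Nat.two_pow_pos 0⟩
          = (s (idx0 ⟨0, Nat.two_pow_pos 0⟩) == s (idx1 ⟨0, Nat.two_pow_pos 0⟩)) := rfl
      rw [h2, spin_beq]
      ring
  | succ k ih =>
      intro p s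
      rw [Hsub, ih, ih, Hsub, pairMap_left, pairMap_right, parityProd_pairMap]

/-- The splitting equivalence: a configuration on `2^(k+1)` spins is equivalent to the
pair (composite spins, even-site spins). -/
def pairEquiv (k : ℕ) : (Fin (2^(k+1)) → Bool) ≃ (Fin (2^k) → Bool) × (Fin (2^k) → Bool) where
  toFun s := (pairMap s, fun i => s (idx0 i))
  invFun := unpair
  left_inv := by
    intro s
    funext j
    by_cases h : j.val % 2 = 0
    · have hj : j = idx0 (halfIdx j) := by apply Fin.ext; simp [idx0, halfIdx]; omega
      rw [hj, unpair_idx0]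
    · have hj : j = idx1 (halfIdx j) := by apply Fin.ext; simp [idx1, halfIdx]; omega
      rw [hj, unpair_idx1]
      show (s (idx0 _) == pairMap s _) = _
      rw [pairMap]
      generalize s (idx0 (halfIdx j)) = a
      generalize s (idx1 (halfIdx j)) = b
      cases a <;> cases b <;> rfl
  right_inv := by
    intro P
    ext i
    · show pairMap (unpair P) i = P.1 i
      rw [pairMap, unpair_idx0, unpair_idx1]
      generalize P.2 i = a
      generalize P.1 i = b
      cases a <;> cases b <;> rfl
    · show unpair P (idx0 i) = P.2 i
      rw [unpair_idx0]

open Classical in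
/-- with vanishing single-spin couplings, the model on 2^{n+1} spins is
equivalent to the model on 2^n composite spins with couplings J'_{k,p} = J_{k+1,p}:
every energy level of the latter appears with multiplicity exactly 2^{2^n}. -/
theorem zero_field_reduction (J : ℕ → ℕ → ℝ) (h0 : ∀ p, J 0 p = 0) (n : ℕ) (E : ℝ) :
    (Finset.univ.filter (fun s : Fin (2^(n+1)) → Bool => Hsub J (n+1) 1 s = E)).card =
      2^(2^n) *
        (Finset.univ.filter
          (fun S : Fin (2^n) → Bool => Hsub (fun k p => J (k+1) p) n 1 S = E)).card := by
  classical
  set J' : ℕ → ℕ → ℝ := fun k p => J (k+1) p with hJ'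
  have key : (Finset.univ.filter (fun s : Fin (2^(n+1)) → Bool => Hsub J (n+1) 1 s = E)).card
      = (Finset.univ.filter
          (fun P : (Fin (2^n) → Bool) × (Fin (2^n) → Bool) => Hsub J' n 1 P.1 = E)).card := by
    apply Finset.card_bij (fun s _ => pairEquiv n s)
    · intro s hs
      simp only [Finset.mem_filter, Finset.mem_univ, true_and] at hs ⊢
      rw [← hs, hsub_pair J h0]
      rfl
    · intro a _ b _ hab
      exact (pairEquiv n).injective hab
    · intro P hP
      refine ⟨(pairEquiv n).symm P, ?_, (pairEquiv n).apply_symm_apply P⟩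
      simp only [Finset.mem_filter, Finset.mem_univ, true_and] at hP ⊢
      rw [hsub_pair J h0]
      have hfst : pairMap ((pairEquiv n).symm P) = P.1 :=
        congrArg Prod.fst ((pairEquiv n).apply_symm_apply P)
      rw [hfst]; exact hP
  rw [key]
  have hfilt : (Finset.univ.filter
      (fun P : (Fin (2^n) → Bool) × (Fin (2^n) → Bool) => Hsub J' n 1 P.1 = E))
      = (Finset.univ.filter (fun S : Fin (2^n) → Bool => Hsub J' n 1 S = E)) ×ˢ
        (Finset.univ : Finset (Fin (2^n) → Bool)) := by
    ext P
    simp [Finset.mem_product]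
  rw [hfilt, Finset.card_product]
  have hcard : (Finset.univ : Finset (Fin (2^n) → Bool)).card = 2^(2^n) := by
    simp
  rw [hcard]
  ring
end
end

section
/- For the parity-locked regime 0 < σ < 1 with J_k = 2^{kσ}J and J ≠ 0, the sequence P_k defined by P_k = [sinh(βJ_k) + P_{k-1}² cosh(βJ_k)]/[cosh(βJ_k) + P_{k-1}² sinh(βJ_k)], P_0 = tanh(βJ), converges to sgn(J) as k → ∞ for any fixed β > 0. -/
/-!
Writing `P_k = tanh u_k`, the addition formula for `tanh` turns the recursion into
`u_k = βJ_k + artanh (tanh² u_{k-1})`, and `0 ≤ artanh (tanh² u) ≤ |u|`.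
For `J > 0` this gives `u_k ≥ βJ_k → ∞`. For `J < 0` one shows `βJ_k ≤ u_k ≤ 0` inductively,
so that `u_k ≤ βJ_k - u_{k-1} ≤ βJ_k - βJ_{k-1} = βJ (2^σ - 1) 2^{(k-1)σ} → -∞`.
-/

open Filter Topology Real

theorem abs_tanh (x : ℝ) : |tanh x| = tanh |x| := by
  rw [tanh_eq_sinh_div_cosh, abs_div, abs_sinh, abs_of_pos (cosh_pos x), ← cosh_abs,
    ← tanh_eq_sinh_div_cosh]

theorem tanh_eq_one_sub (x : ℝ) : tanh x = 1 - 2 / (exp (2 * x) + 1) := by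
  rw [tanh_eq, exp_neg, two_mul, exp_add]
  field_simp
  ring

theorem tendsto_tanh_atTop : Tendsto tanh atTop (𝓝 1) := by
  have hexp : Tendsto (fun x => exp (2 * x) + 1) atTop atTop :=
    tendsto_atTop_add_const_right _ _
      (tendsto_exp_atTop.comp (tendsto_id.const_mul_atTop two_pos))
  simpa [funext tanh_eq_one_sub] using
    (tendsto_const_nhds (x := (1 : ℝ))).sub (tendsto_const_nhds.div_atTop hexp)

theorem tendsto_tanh_atBot : Tendsto tanh atBot (𝓝 (-1)) := by
  simpa [Function.comp_def] using (tendsto_tanh_atTop.comp tendsto_neg_atBot_atTop).neg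

theorem tanh_add_eq_div (x y : ℝ) :
    tanh (x + y) = (sinh x + tanh y * cosh x) / (cosh x + tanh y * sinh x) := by
  have hy := (cosh_pos y).ne'
  rw [tanh_eq_sinh_div_cosh, tanh_eq_sinh_div_cosh, sinh_add, cosh_add]
  field_simp

theorem tanh_artanh_tanh_sq (u : ℝ) : tanh (artanh (tanh u ^ 2)) = tanh u ^ 2 :=
  tanh_artanh ⟨by linarith [sq_nonneg (tanh u)], tanh_sq_lt_one u⟩

theorem artanh_tanh_sq_le_abs (u : ℝ) : artanh (tanh u ^ 2) ≤ |u| := by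
  have hsq : tanh u ^ 2 ≤ tanh |u| := by
    rw [← abs_tanh, ← sq_abs]
    exact pow_le_of_le_one (abs_nonneg _) (abs_tanh_lt_one u).le two_ne_zero
  calc artanh (tanh u ^ 2) ≤ artanh (tanh |u|) :=
        artanh_le_artanh (by linarith [sq_nonneg (tanh u)]) (tanh_lt_one _) hsq
    _ = |u| := artanh_tanh _

/-- `effCoupling x k = artanh P_k` for the bare couplings `x k = β J_k`. -/
noncomputable def effCoupling (x : ℕ → ℝ) : ℕ → ℝ
  | 0 => x 0
  | k + 1 => x (k + 1) + artanh (tanh (effCoupling x k) ^ 2)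

section effCoupling

variable (x : ℕ → ℝ)

theorem le_effCoupling : ∀ k, x k ≤ effCoupling x k
  | 0 => le_rfl
  | _ + 1 => le_add_of_nonneg_right (artanh_nonneg (sq_nonneg _))

theorem effCoupling_succ_le {k : ℕ} (hk : effCoupling x k ≤ 0) :
    effCoupling x (k + 1) ≤ x (k + 1) - x k := by
  have := artanh_tanh_sq_le_abs (effCoupling x k)
  rw [abs_of_nonpos hk] at this
  have := le_effCoupling x k
  simp only [effCoupling]
  linarith

theorem effCoupling_nonpos (h0 : x 0 ≤ 0) (hx : Antitone x) : ∀ k, effCoupling x k ≤ 0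
  | 0 => h0
  | k + 1 => (effCoupling_succ_le x (effCoupling_nonpos h0 hx k)).trans
      (sub_nonpos.2 (hx k.le_succ))

theorem tendsto_effCoupling_atTop (hx : Tendsto x atTop atTop) :
    Tendsto (effCoupling x) atTop atTop :=
  tendsto_atTop_mono (le_effCoupling x) hx

theorem tendsto_effCoupling_atBot (h0 : x 0 ≤ 0) (hx : Antitone x)
    (hdiff : Tendsto (fun k => x (k + 1) - x k) atTop atBot) :
    Tendsto (effCoupling x) atTop atBot := by
  rw [← tendsto_add_atTop_iff_nat 1]
  exact tendsto_atBot_mono (fun k => effCoupling_succ_le x (effCoupling_nonpos x h0 hx k)) hdiff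

end effCoupling

section geometric

variable {c r : ℝ}

theorem tendsto_effCoupling_geom_atTop (hc : 0 < c) (hr : 1 < r) :
    Tendsto (effCoupling fun k => c * r ^ k) atTop atTop :=
  tendsto_effCoupling_atTop _ ((tendsto_pow_atTop_atTop_of_one_lt hr).const_mul_atTop hc)

theorem tendsto_effCoupling_geom_atBot (hc : c < 0) (hr : 1 < r) :
    Tendsto (effCoupling fun k => c * r ^ k) atTop atBot := by
  refine tendsto_effCoupling_atBot _ (by simpa using hc.le)
    (fun m n hmn => mul_le_mul_of_nonpos_left (pow_le_pow_right₀ hr.le hmn) hc.le) ?_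
  have hdiff : ∀ k : ℕ, c * r ^ (k + 1) - c * r ^ k = c * (r - 1) * r ^ k := fun k => by ring
  simpa only [hdiff] using
    (tendsto_pow_atTop_atTop_of_one_lt hr).const_mul_atTop_of_neg
      (mul_neg_of_neg_of_pos hc (sub_pos.2 hr))

end geometric

theorem Jcoup_eq_pow (σ J : ℝ) (k : ℕ) : Jcoup σ J k = ((2 : ℝ) ^ σ) ^ k * J := by
  rw [Jcoup, mul_comm (k : ℝ), rpow_mul zero_le_two, rpow_natCast]

theorem Pseq_eq_tanh_effCoupling (β σ J : ℝ) :
    ∀ k, Pseq β σ J k = tanh (effCoupling (fun k => β * J * ((2 : ℝ) ^ σ) ^ k) k)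
  | 0 => by simp [Pseq, effCoupling]
  | k + 1 => by
    rw [Pseq, Pseq_eq_tanh_effCoupling β σ J k, effCoupling, tanh_add_eq_div,
      tanh_artanh_tanh_sq, Jcoup_eq_pow]
    ring_nf

theorem parity_locked_regime_general (β σ J : ℝ) (hβ : 0 < β) (hJ : J ≠ 0)
    (hσ0 : 0 < σ) :
    Filter.Tendsto (Pseq β σ J) Filter.atTop (nhds (Real.sign J)) := by
  have hr : 1 < (2 : ℝ) ^ σ := one_lt_rpow one_lt_two hσ0
  rw [funext (Pseq_eq_tanh_effCoupling β σ J)]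
  rcases hJ.lt_or_gt with hneg | hpos
  · rw [sign_of_neg hneg]
    exact tendsto_tanh_atBot.comp
      (tendsto_effCoupling_geom_atBot (mul_neg_of_pos_of_neg hβ hneg) hr)
  · rw [sign_of_pos hpos]
    exact tendsto_tanh_atTop.comp (tendsto_effCoupling_geom_atTop (mul_pos hβ hpos) hr)

/-- in the parity-locked regime 0 < σ < 1 with J_k = 2^{kσ}J, J ≠ 0,
the parity recursion converges to sgn(J) for any fixed β > 0. -/
theorem parity_locked_regime (β σ J : ℝ) (hβ : 0 < β) (hJ : J ≠ 0)
    (hσ0 : 0 < σ) (hσ1 : σ < 1) :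
    Filter.Tendsto (Pseq β σ J) Filter.atTop (nhds (Real.sign J)) :=
  parity_locked_regime_general β σ J hβ hJ hσ0
end
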